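/- For each n ≥ 1 let Id_n denote the 1-relation (Fin n, Fin n, v_n) where v_n(x,y) = 1 if x = y and v_n(x,y) = 0 otherwise. Then: (a) each Id_n is reduced; (b) for n ≠ m there is no isomorphism of 1-relations Id_n ≅ Id_m; (c) for n ≠ m, Id_n and Id_m are not equivalent under the equivalence relation ≈ generated by existence of a morphism of 1-relations. Consequently there are infinitely many ≈-classes of 1-relations and infinitely many isomorphism classes of reduced 1-relations. -/

import Mathlib

/-- A `k`-relation: nonempty finite types `F`, `G` and a map `v : F × G → Fin (k+1)`
with no identically zero row or column. -/
structure KRel (k : ℕ) where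
  F : Type
  G : Type
  [finF : Fintype F]
  [finG : Fintype G]
  [neF : Nonempty F]
  [neG : Nonempty G]
  v : F × G → Fin (k + 1)
  hrow : ∀ x : F, ∃ y : G, v (x, y) ≠ 0
  hcol : ∀ y : G, ∃ x : F, v (x, y) ≠ 0

attribute [instance] KRel.finF KRel.finG KRel.neF KRel.neG

/-- A morphism of `k`-relations: a pair of surjections compatible with the values. -/
def IsHom {k : ℕ} (C C' : KRel k) (f : C.F → C'.F) (g : C.G → C'.G) : Prop :=
  Function.Surjective f ∧ Function.Surjective g ∧
    ∀ (x : C.F) (y : C.G), C'.v (f x, g y) = C.v (x, y)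

/-- A `k`-relation is reduced if no two rows and no two columns coincide. -/
def Reduced {k : ℕ} (C : KRel k) : Prop :=
  (∀ x x' : C.F, (∀ y, C.v (x, y) = C.v (x', y)) → x = x') ∧
  (∀ y y' : C.G, (∀ x, C.v (x, y) = C.v (x, y')) → y = y')

/-- The equivalence relation on rows: equality of the corresponding row of `v`. -/
def rowSetoid {k : ℕ} (C : KRel k) : Setoid C.F where
  r x x' := ∀ y, C.v (x, y) = C.v (x', y)
  iseqv := ⟨fun _ _ => rfl, fun h y => (h y).symm, fun h h' y => (h y).trans (h' y)⟩

/-- The equivalence relation on columns: equality of the corresponding column of `v`. -/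
def colSetoid {k : ℕ} (C : KRel k) : Setoid C.G where
  r y y' := ∀ x, C.v (x, y) = C.v (x, y')
  iseqv := ⟨fun _ _ => rfl, fun h x => (h x).symm, fun h h' x => (h x).trans (h' x)⟩

/-- The canonical reduction `r(C)` of a `k`-relation `C`. -/
noncomputable def reduce {k : ℕ} (C : KRel k) : KRel k where
  F := Quotient (rowSetoid C)
  G := Quotient (colSetoid C)
  finF := Fintype.ofFinite _
  finG := Fintype.ofFinite _
  neF := ⟨Quotient.mk _ (Classical.arbitrary _)⟩
  neG := ⟨Quotient.mk _ (Classical.arbitrary _)⟩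
  v := fun p =>
    Quotient.liftOn₂ p.1 p.2 (fun x y => C.v (x, y))
      (fun _ y x' _ hx hy => (hx y).trans (hy x'))
  hrow := fun qx =>
    Quotient.inductionOn qx fun x =>
      let ⟨y, hy⟩ := C.hrow x
      ⟨Quotient.mk (colSetoid C) y, hy⟩
  hcol := fun qy =>
    Quotient.inductionOn qy fun y =>
      let ⟨x, hx⟩ := C.hcol y
      ⟨Quotient.mk (rowSetoid C) x, hx⟩

/-- An isomorphism of `k`-relations: a morphism whose two components are bijections. -/
def IsIso {k : ℕ} (C C' : KRel k) : Prop :=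
  ∃ (f : C.F → C'.F) (g : C.G → C'.G),
    IsHom C C' f g ∧ Function.Bijective f ∧ Function.Bijective g

/-- The identity `1`-relation `Id_n` on a set with `n ≥ 1` elements. -/
def IdRel (n : ℕ) (hn : 0 < n) : KRel 1 where
  F := Fin n
  G := Fin n
  neF := ⟨⟨0, hn⟩⟩
  neG := ⟨⟨0, hn⟩⟩
  v := fun p => if p.1 = p.2 then 1 else 0
  hrow := fun x => ⟨x, by simp⟩
  hcol := fun y => ⟨y, by simp⟩

/-! A morphism `(f, g)` turns each row of `C` into the corresponding row of `C'` precomposed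
with the surjection `g`, and `f` is surjective, so `C` and `C'` have the same number of distinct
rows. For the reduced relation `Id_n` this number is `n`, which separates the `Id_n` both up to
isomorphism and up to `≈`. -/

namespace KRel

variable {k : ℕ}

def row (C : KRel k) (x : C.F) : C.G → Fin (k + 1) := fun y => C.v (x, y)

/-- The number of rows of the reduction `reduce C`. -/
noncomputable def rowCount (C : KRel k) : ℕ := Nat.card (Set.range C.row)

theorem rowCount_eq_of_isHom {C C' : KRel k} {f : C.F → C'.F} {g : C.G → C'.G}
    (h : IsHom C C' f g) : C.rowCount = C'.rowCount := by
  obtain ⟨hf, hg, hv⟩ := h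
  have hrow : C.row = (· ∘ g) ∘ C'.row ∘ f := by
    funext x y
    exact (hv x y).symm
  rw [rowCount, hrow, Set.range_comp, hf.range_comp,
    Nat.card_image_of_injective hg.injective_comp_right, rowCount]

theorem rowCount_eq_of_eqvGen {C C' : KRel k}
    (h : Relation.EqvGen (fun C C' : KRel k => ∃ f g, IsHom C C' f g) C C') :
    C.rowCount = C'.rowCount := by
  induction h with
  | rel _ _ h =>
    obtain ⟨_, _, hfg⟩ := h
    exact rowCount_eq_of_isHom hfg
  | refl => rfl
  | symm _ _ _ ih => exact ih.symm
  | trans _ _ _ _ _ ih ih' => exact ih.trans ih'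

end KRel

theorem Reduced.rowCount_eq {k : ℕ} {C : KRel k} (hC : Reduced C) :
    C.rowCount = Nat.card C.F :=
  Nat.card_range_of_injective fun x x' h => hC.1 x x' (congrFun h)

theorem reduced_IdRel (n : ℕ) (hn : 0 < n) : Reduced (IdRel n hn) := by
  constructor
  · intro (x : Fin n) (x' : Fin n) h
    have hx : (if x = x' then (1 : Fin 2) else 0) = if x' = x' then 1 else 0 := h x'
    exact (by simpa using hx : x = x')
  · intro (y : Fin n) (y' : Fin n) h
    have hy : (if y = y then (1 : Fin 2) else 0) = if y = y' then 1 else 0 := h y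
    exact (by simpa using hy : y = y')

theorem rowCount_IdRel (n : ℕ) (hn : 0 < n) : (IdRel n hn).rowCount = n :=
  (reduced_IdRel n hn).rowCount_eq.trans (Nat.card_fin n)

/-- the `Id_n` are reduced, pairwise non-isomorphic, and pairwise
inequivalent for the equivalence relation generated by existence of a morphism;
consequently there are infinitely many equivalence classes of `1`-relations and
infinitely many isomorphism classes of reduced `1`-relations. -/
theorem stmt9 :
    (∀ (n : ℕ) (hn : 0 < n), Reduced (IdRel n hn)) ∧
    (∀ (n m : ℕ) (hn : 0 < n) (hm : 0 < m), n ≠ m → ¬ IsIso (IdRel n hn) (IdRel m hm)) ∧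
    (∀ (n m : ℕ) (hn : 0 < n) (hm : 0 < m), n ≠ m →
        ¬ Relation.EqvGen (fun C C' : KRel 1 => ∃ f g, IsHom C C' f g)
            (IdRel n hn) (IdRel m hm)) ∧
    Infinite (Quot (fun C C' : KRel 1 => ∃ f g, IsHom C C' f g)) ∧
    Infinite (Quot (fun C C' : {D : KRel 1 // Reduced D} => IsIso C.1 C'.1)) := by
  have not_eqvGen : ∀ (n m : ℕ) (hn : 0 < n) (hm : 0 < m), n ≠ m →
      ¬ Relation.EqvGen (fun C C' : KRel 1 => ∃ f g, IsHom C C' f g)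
        (IdRel n hn) (IdRel m hm) := by
    intro n m hn hm hnm h
    simpa only [rowCount_IdRel, hnm] using KRel.rowCount_eq_of_eqvGen h
  refine ⟨reduced_IdRel, ?_, not_eqvGen, ?_, ?_⟩
  · rintro n m hn hm hnm ⟨f, g, hfg, -⟩
    exact not_eqvGen n m hn hm hnm (.rel _ _ ⟨f, g, hfg⟩)
  · refine Infinite.of_injective (fun n : ℕ => Quot.mk _ (IdRel (n + 1) n.succ_pos))
      fun a b h => ?_
    have := congrArg (Quot.lift KRel.rowCount fun _ _ ⟨_, _, hfg⟩ =>
      KRel.rowCount_eq_of_isHom hfg) h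
    simpa only [Quot.lift_mk, rowCount_IdRel, Nat.add_right_cancel_iff] using this
  · refine Infinite.of_injective
      (fun n : ℕ => Quot.mk _ ⟨IdRel (n + 1) n.succ_pos, reduced_IdRel _ _⟩) fun a b h => ?_
    have := congrArg (Quot.lift (fun C : {D : KRel 1 // Reduced D} => C.1.rowCount)
      fun _ _ ⟨_, _, hfg, _⟩ => KRel.rowCount_eq_of_isHom hfg) h
    simpa only [Quot.lift_mk, rowCount_IdRel, Nat.add_right_cancel_iff] using this
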